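/- For all X, Y ∈ W, ⟨X, P(Y)⟩ = ⟨X, Y⟩ − tr(S_X∘S_Y). Consequently P is self-adjoint and satisfies ⟨X, P(X)⟩ ≥ ⟨X, X⟩ for all X ∈ W; in particular P is a linear automorphism of W, and g̃(X,Y) := ⟨X, P(Y)⟩ defines an inner product on W. -/

import Mathlib

open scoped RealInnerProductSpace

/-- The endomorphism `S_X` of `V` associated to a second fundamental form `Π` and its
Weingarten operator `A`: `S_X(Z) = Π(X, P_W Z) - A_{P_{W^⊥} Z}(X)`. -/
noncomputable def Sop {V : Type*} [NormedAddCommGroup V] [InnerProductSpace ℝ V]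
    [FiniteDimensional ℝ V] (W : Submodule ℝ V)
    (Pi : W →ₗ[ℝ] W →ₗ[ℝ] ↥Wᗮ) (A : ↥Wᗮ →ₗ[ℝ] W →ₗ[ℝ] W) (X : W) : V →ₗ[ℝ] V :=
  Wᗮ.subtype ∘ₗ (Pi X) ∘ₗ (W.orthogonalProjectionOnto).toLinearMap
    - W.subtype ∘ₗ (A.flip X) ∘ₗ (Wᗮ.orthogonalProjectionOnto).toLinearMap

/-- The operator `P : W → W`, `P(X) = X - 2 ∑_A S_{e_A}(S_{e_A}(X))` (the sum, which lies
in `W`, is realized via the orthogonal projection onto `W`). -/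
noncomputable def Pop {V : Type*} [NormedAddCommGroup V] [InnerProductSpace ℝ V]
    [FiniteDimensional ℝ V] (W : Submodule ℝ V)
    (Pi : W →ₗ[ℝ] W →ₗ[ℝ] ↥Wᗮ) (A : ↥Wᗮ →ₗ[ℝ] W →ₗ[ℝ] W)
    {ι : Type*} [Fintype ι] (eW : OrthonormalBasis ι ℝ ↥W) : ↥W →ₗ[ℝ] ↥W :=
  LinearMap.id - (2 : ℝ) • ((W.orthogonalProjectionOnto).toLinearMap ∘ₗ
    (∑ i, Sop W Pi A (eW i) ∘ₗ Sop W Pi A (eW i)) ∘ₗ W.subtype)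

/-!
Split `V = W ⊕ W^⊥`. Then `S_X` is off-diagonal, with blocks `Π(X, ·) : W → W^⊥` and
`-A_(·) X : W^⊥ → W`, so `S_X ∘ S_Y` is block-diagonal and, by the Weingarten equation,
both `⟨X, S_e S_e Y⟩` and the trace of each diagonal block of `S_X ∘ S_Y` are, up to sign,
the pairing `∑ᵢ ⟨Π(eᵢ, X), Π(eᵢ, Y)⟩`. Hence `⟨X, P Y⟩ = ⟨X, Y⟩ + 2 ∑ᵢ ⟨Π(eᵢ, X), Π(eᵢ, Y)⟩`,
and everything else follows from this pairing being symmetric and positive semidefinite.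
-/

namespace LinearMap

variable {R M N : Type*} [CommRing R] [AddCommGroup M] [Module R M] [AddCommGroup N]
  [Module R N] [Module.Free R M] [Module.Finite R M] [Module.Free R N] [Module.Finite R N]

theorem trace_comp_comp_of_comp_eq_id {i : N →ₗ[R] M} {p : M →ₗ[R] N} (h : p ∘ₗ i = id)
    (T : N →ₗ[R] N) : trace R M (i ∘ₗ T ∘ₗ p) = trace R N T := by
  rw [trace_comp_comm', comp_assoc, h, comp_id]

theorem bijective_of_inner_map_self_pos {E : Type*} [NormedAddCommGroup E]
    [InnerProductSpace ℝ E] [FiniteDimensional ℝ E] {T : E →ₗ[ℝ] E}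
    (hT : ∀ x, x ≠ 0 → 0 < ⟪x, T x⟫) : Function.Bijective T := by
  rw [Function.Bijective, ← injective_iff_surjective, and_self, injective_iff_map_eq_zero]
  intro x hx
  by_contra hx0
  simpa [hx] using hT x hx0

end LinearMap

section SecondFundamentalForm

variable {V : Type*} [NormedAddCommGroup V] [InnerProductSpace ℝ V] {W : Submodule ℝ V}
  (Pi : W →ₗ[ℝ] W →ₗ[ℝ] ↥Wᗮ) {ι : Type*} [Fintype ι] (eW : OrthonormalBasis ι ℝ W)

noncomputable def fundamentalPairing (X Y : W) : ℝ :=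
  ∑ i, ⟪Pi (eW i) X, Pi (eW i) Y⟫

theorem fundamentalPairing_comm (X Y : W) :
    fundamentalPairing Pi eW X Y = fundamentalPairing Pi eW Y X :=
  Finset.sum_congr rfl fun _ _ => real_inner_comm _ _

theorem fundamentalPairing_self_nonneg (X : W) : 0 ≤ fundamentalPairing Pi eW X X :=
  Finset.sum_nonneg fun _ _ => real_inner_self_nonneg

variable [FiniteDimensional ℝ V] (A : ↥Wᗮ →ₗ[ℝ] W →ₗ[ℝ] W)

theorem Sop_apply_coe (X Y : W) : Sop W Pi A X (Y : V) = (Pi X Y : V) := by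
  simp [Sop, Submodule.orthogonalProjectionOnto_apply_of_mem_orthogonal
    (W.le_orthogonal_orthogonal Y.2)]

theorem Sop_apply_coe_orthogonal (X : W) (ξ : ↥Wᗮ) : Sop W Pi A X (ξ : V) = -(A ξ X : V) := by
  simp [Sop, Submodule.orthogonalProjectionOnto_apply_of_mem_orthogonal ξ.2]

theorem Sop_comp_Sop (X Y : W) : Sop W Pi A X ∘ₗ Sop W Pi A Y
    = -(Wᗮ.subtype ∘ₗ (Pi X ∘ₗ A.flip Y) ∘ₗ (Wᗮ.orthogonalProjectionOnto).toLinearMap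
      + W.subtype ∘ₗ (A.flip X ∘ₗ Pi Y) ∘ₗ (W.orthogonalProjectionOnto).toLinearMap) := by
  ext v
  have hY : Sop W Pi A Y v = (Pi Y (W.orthogonalProjectionOnto v) : V)
      - (A (Wᗮ.orthogonalProjectionOnto v) Y : V) := rfl
  simp only [LinearMap.comp_apply, hY, map_sub, Sop_apply_coe, Sop_apply_coe_orthogonal,
    LinearMap.neg_apply, LinearMap.add_apply, Submodule.coe_subtype, LinearMap.flip_apply,
    ContinuousLinearMap.coe_coe]
  abel

variable {Pi A}
variable (hWein : ∀ (ξ : ↥Wᗮ) (X Y : W), ⟪(A ξ X : V), (Y : V)⟫ = ⟪(Pi X Y : V), (ξ : V)⟫)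
include hWein

omit [FiniteDimensional ℝ V] in
theorem trace_flip_comp_eq_fundamentalPairing (hsymm : ∀ X Y : W, Pi X Y = Pi Y X) (X Y : W) :
    LinearMap.trace ℝ W (A.flip X ∘ₗ Pi Y) = fundamentalPairing Pi eW X Y := by
  rw [LinearMap.trace_eq_sum_inner _ eW]
  refine Finset.sum_congr rfl fun i _ => ?_
  rw [real_inner_comm, LinearMap.comp_apply, LinearMap.flip_apply, Submodule.coe_inner, hWein,
    hsymm, hsymm Y]
  rfl

theorem trace_Sop_comp_Sop (hsymm : ∀ X Y : W, Pi X Y = Pi Y X) (X Y : W) :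
    LinearMap.trace ℝ V (Sop W Pi A X ∘ₗ Sop W Pi A Y) = -(2 * fundamentalPairing Pi eW X Y) := by
  have hproj (K : Submodule ℝ V) :
      (K.orthogonalProjectionOnto).toLinearMap ∘ₗ K.subtype = LinearMap.id := by
    ext x; simp
  rw [Sop_comp_Sop, map_neg, map_add, LinearMap.trace_comp_comp_of_comp_eq_id (hproj _),
    LinearMap.trace_comp_comp_of_comp_eq_id (hproj _), LinearMap.trace_comp_comm',
    trace_flip_comp_eq_fundamentalPairing eW hWein hsymm,
    trace_flip_comp_eq_fundamentalPairing eW hWein hsymm, fundamentalPairing_comm Pi eW Y]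
  ring

theorem inner_Sop_Sop (Z X Y : W) :
    ⟪(X : V), Sop W Pi A Z (Sop W Pi A Z Y)⟫ = -⟪Pi Z X, Pi Z Y⟫ := by
  rw [Sop_apply_coe, Sop_apply_coe_orthogonal, inner_neg_right, real_inner_comm, hWein]
  rfl

theorem inner_Pop (X Y : W) :
    ⟪(X : V), (Pop W Pi A eW Y : V)⟫ = ⟪(X : V), (Y : V)⟫ + 2 * fundamentalPairing Pi eW X Y := by
  simp only [Pop, LinearMap.sub_apply, LinearMap.id_apply, LinearMap.smul_apply,
    Submodule.coe_sub, Submodule.coe_smul, inner_sub_right, inner_smul_right,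
    LinearMap.comp_apply, Submodule.coe_subtype, ContinuousLinearMap.coe_coe,
    ← Submodule.coe_inner, Submodule.inner_orthogonalProjectionOnto_eq_of_mem_left,
    LinearMap.sum_apply, inner_sum, inner_Sop_Sop hWein, fundamentalPairing,
    Finset.sum_neg_distrib]
  ring

end SecondFundamentalForm

/-- `⟨X, P Y⟩ = ⟨X, Y⟩ - tr (S_X ∘ S_Y)`; consequently `P` is self-adjoint,
`⟨X, P X⟩ ≥ ⟨X, X⟩`, `P` is a linear automorphism of `W`, and
`g̃(X, Y) = ⟨X, P Y⟩` defines an inner product on `W`. -/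
theorem stmt_9 {V : Type*} [NormedAddCommGroup V] [InnerProductSpace ℝ V]
    [FiniteDimensional ℝ V] (W : Submodule ℝ V)
    (Pi : W →ₗ[ℝ] W →ₗ[ℝ] ↥Wᗮ) (A : ↥Wᗮ →ₗ[ℝ] W →ₗ[ℝ] W)
    (hsymm : ∀ X Y : W, Pi X Y = Pi Y X)
    (hWein : ∀ (ξ : ↥Wᗮ) (X Y : W), ⟪((A ξ X : W) : V), (Y : V)⟫ = ⟪((Pi X Y : ↥Wᗮ) : V), (ξ : V)⟫)
    {ι : Type*} [Fintype ι] (eW : OrthonormalBasis ι ℝ ↥W) :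
    (∀ X Y : W, ⟪(X : V), ((Pop W Pi A eW Y : W) : V)⟫
        = ⟪(X : V), (Y : V)⟫ - LinearMap.trace ℝ V (Sop W Pi A X ∘ₗ Sop W Pi A Y)) ∧
      (∀ X Y : W, ⟪((Pop W Pi A eW X : W) : V), (Y : V)⟫
        = ⟪(X : V), ((Pop W Pi A eW Y : W) : V)⟫) ∧
      (∀ X : W, ⟪(X : V), (X : V)⟫ ≤ ⟪(X : V), ((Pop W Pi A eW X : W) : V)⟫) ∧
      Function.Bijective (Pop W Pi A eW) ∧
      (∀ X : W, X ≠ 0 → 0 < ⟪(X : V), ((Pop W Pi A eW X : W) : V)⟫) := by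
  have hP := inner_Pop eW hWein
  have hle (X : W) : ⟪(X : V), (X : V)⟫ ≤ ⟪(X : V), (Pop W Pi A eW X : V)⟫ := by
    rw [hP]; linarith [fundamentalPairing_self_nonneg Pi eW X]
  have hpos (X : W) (hX : X ≠ 0) : 0 < ⟪(X : V), (Pop W Pi A eW X : V)⟫ :=
    (real_inner_self_pos.2 (by simpa using hX)).trans_le (hle X)
  refine ⟨fun X Y => ?_, fun X Y => ?_, hle, LinearMap.bijective_of_inner_map_self_pos hpos, hpos⟩
  · rw [hP, trace_Sop_comp_Sop eW hWein hsymm]; ring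
  · rw [real_inner_comm, hP, hP, fundamentalPairing_comm, real_inner_comm]
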